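/- arXiv:1407.1558 — 3 statements merged into one kernel-verified Lean document; each statement's English description precedes it below -/
import Mathlib

section
/- (Skolem–Mahler–Lech for Q_p with unit roots) Let a_n = Σ_{i=1}^k c_i z_i^n be a sequence in Q_p, where c_i ∈ Z_p and z_i ∈ Z_p^× are p-adic units, p > 2. Then the set {n ∈ N : a_n = 0} is a finite union of a finite set and finitely many arithmetic progressions. -/
/-!
Write `N = (p - 1) p²`. For a unit `z`, `E = z ^ N - 1` has norm at most `p⁻³`, and
`z ^ (N q) = (1 + E) ^ q = ∑ⱼ Eʲ (q choose j)`. Expanding `q choose j` in powers of `q` turns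
this into a power series in `q` whose `m`-th coefficient has norm at most `p⁻²ᵐ` (since
`‖j!‖ ≥ p⁻ʲ`), hence with radius at least `p² > 2`. So for each residue `r` mod `N`,
`q ↦ a (N q + r)` is the restriction to `ℕ` of a power series converging beyond the unit ball.
If it vanishes at infinitely many `q`, the zeros accumulate in the compact unit ball; the
expansion around the accumulation point is then zero, and by the ultrametric inequality that
expansion converges on the whole unit ball, so `a (N q + r) = 0` for every `q`.
-/

open scoped NNReal ENNReal Nat

section FinsetSum

variable {𝕜 E F ι : Type*} [NontriviallyNormedField 𝕜] [NormedAddCommGroup E] [NormedSpace 𝕜 E]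
  [NormedAddCommGroup F] [NormedSpace 𝕜 F]

theorem HasFPowerSeriesOnBall.finsetSum {s : Finset ι} {f : ι → E → F}
    {P : ι → FormalMultilinearSeries 𝕜 E F} {x : E} {r : ℝ≥0∞} (hr : 0 < r)
    (h : ∀ i ∈ s, HasFPowerSeriesOnBall (f i) (P i) x r) :
    HasFPowerSeriesOnBall (∑ i ∈ s, f i) (∑ i ∈ s, P i) x r := by
  classical
  induction s using Finset.induction_on with
  | empty =>
    simpa [Pi.zero_def] using (hasFPowerSeriesOnBall_const (c := (0 : F)) (e := x)).mono hr le_top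
  | insert i s hi ih =>
    rw [Finset.sum_insert hi, Finset.sum_insert hi]
    exact (h i (Finset.mem_insert_self i s)).add (ih fun j hj => h j (Finset.mem_insert_of_mem hj))

end FinsetSum

section Ultrametric

variable {𝕜 F : Type*} [NontriviallyNormedField 𝕜] [IsUltrametricDist 𝕜] [ProperSpace 𝕜]
  [NormedAddCommGroup F] [NormedSpace 𝕜 F] [CompleteSpace F] {f : 𝕜 → F}
  {P : FormalMultilinearSeries 𝕜 𝕜 F} {r : ℝ≥0∞}

theorem HasFPowerSeriesOnBall.finite_zeros_or_eqOn_zero (hf : HasFPowerSeriesOnBall f P 0 r)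
    (hr : 2 < r) :
    (Metric.closedBall (0 : 𝕜) 1 ∩ f ⁻¹' {0}).Finite ∨ Set.EqOn f 0 (Metric.closedBall 0 1) := by
  refine (Set.finite_or_infinite _).imp_right fun hinf => ?_
  obtain ⟨x₀, hx₀, hacc⟩ :=
    hinf.exists_accPt_of_subset_isCompact (isCompact_closedBall 0 1) Set.inter_subset_left
  have hx₀1 : (‖x₀‖₊ : ℝ≥0∞) ≤ 1 := by simpa [← NNReal.coe_le_one] using hx₀
  have hchange := hf.changeOrigin (hx₀1.trans_lt (lt_trans (by norm_num) hr))
  rw [zero_add] at hchange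
  have hzero : P.changeOrigin x₀ = 0 := by
    refine hchange.hasFPowerSeriesAt.eq_zero_of_eventually
      (hchange.analyticAt.frequently_zero_iff_eventually_zero.mp ?_)
    exact (accPt_iff_frequently_nhdsNE.mp hacc).mono fun z hz => hz.2
  intro x hx
  have hdist : (‖x - x₀‖₊ : ℝ≥0∞) ≤ 1 := by
    rw [IsUltrametricDist.closedBall_eq_of_mem hx₀] at hx
    simpa [← NNReal.coe_le_one, dist_eq_norm] using hx
  have hmem : x - x₀ ∈ Metric.eball (0 : 𝕜) (r - ‖x₀‖₊) := by
    rw [Metric.mem_eball, edist_zero_right]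
    refine hdist.trans_lt (lt_of_lt_of_le ?_ (tsub_le_tsub_left hx₀1 r))
    rwa [lt_tsub_iff_right, one_add_one_eq_two]
  simpa [hzero, FormalMultilinearSeries.sum] using hchange.sum hmem

theorem HasFPowerSeriesOnBall.finite_natCast_zeros_or_forall [CharZero 𝕜]
    (hf : HasFPowerSeriesOnBall f P 0 r) (hr : 2 < r) :
    {n : ℕ | f n = 0}.Finite ∨ ∀ n : ℕ, f n = 0 := by
  have hball (n : ℕ) : (n : 𝕜) ∈ Metric.closedBall 0 1 :=
    mem_closedBall_zero_iff.mpr (IsUltrametricDist.norm_natCast_le_one 𝕜 n)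
  refine (hf.finite_zeros_or_eqOn_zero hr).imp (fun h => ?_) fun h n => h (hball n)
  exact (h.preimage Nat.cast_injective.injOn).subset fun n hn => ⟨hball n, hn⟩

end Ultrametric

theorem exists_finset_union_progressions {Z : Set ℕ} {N : ℕ} (hN : 0 < N)
    (h : ∀ r, {q | N * q + r ∈ Z}.Finite ∨ ∀ q, N * q + r ∈ Z) :
    ∃ (S : Finset ℕ) (P : Finset (ℕ × ℕ)), (∀ q ∈ P, 0 < q.1) ∧
      Z = ↑S ∪ ⋃ q ∈ P, {n | ∃ m, n = q.2 + q.1 * m} := by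
  classical
  set G := (Finset.range N).filter fun r => ∀ q, N * q + r ∈ Z
  have hS : (Z ∩ {n | n % N ∉ G}).Finite := by
    refine (Set.Finite.biUnion (s := {r | r < N ∧ r ∉ G}) (Set.finite_lt_nat N |>.subset
      fun r hr => hr.1) fun r hr => ((h r).resolve_right ?_).image (N * · + r)).subset ?_
    · simpa [G, hr.1] using hr.2
    · rintro n ⟨hnZ, hnG⟩
      exact Set.mem_biUnion ⟨Nat.mod_lt n hN, hnG⟩ ⟨n / N, by simpa [Nat.div_add_mod] using hnZ,
        Nat.div_add_mod n N⟩
  refine ⟨hS.toFinset, G.image (N, ·), by simp [hN], ?_⟩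
  ext n
  simp only [Set.Finite.coe_toFinset, Set.mem_union, Set.mem_inter_iff, Set.mem_ofPred_eq,
    Set.mem_iUnion, exists_prop, Finset.mem_image]
  constructor
  · intro hn
    by_cases hG : n % N ∈ G
    · exact Or.inr ⟨_, ⟨n % N, hG, rfl⟩, n / N, (Nat.mod_add_div n N).symm⟩
    · exact Or.inl ⟨hn, hG⟩
  · rintro (⟨hn, -⟩ | ⟨-, ⟨r, hr, rfl⟩, m, rfl⟩)
    · exact hn
    · simpa [G, add_comm] using (Finset.mem_filter.mp hr).2 m

namespace SkolemMahlerLech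

variable {p : ℕ} [Fact p.Prime]

theorem dvd_unit_pow_sub_one {z : ℤ_[p]} (hz : ‖z‖ = 1) (k : ℕ) :
    (p : ℤ_[p]) ^ (k + 1) ∣ z ^ ((p - 1) * p ^ k) - 1 := by
  have hz0 : PadicInt.toZMod z ≠ 0 := fun h0 =>
    (IsLocalRing.mem_maximalIdeal z).mp (PadicInt.ker_toZMod (p := p) ▸ h0)
      (PadicInt.isUnit_iff.mpr hz)
  have hfermat : (p : ℤ_[p]) ∣ z ^ (p - 1) - 1 := by
    rw [← Ideal.mem_span_singleton, ← PadicInt.maximalIdeal_eq_span_p, ← PadicInt.ker_toZMod,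
      RingHom.mem_ker, map_sub, map_pow, ZMod.pow_card_sub_one_eq_one hz0, map_one, sub_self]
  simpa [pow_mul] using dvd_sub_pow_of_dvd_sub hfermat k

theorem norm_unit_pow_sub_one_le {z : ℤ_[p]} (hz : ‖z‖ = 1) (k : ℕ) :
    ‖(z : ℚ_[p]) ^ ((p - 1) * p ^ k) - 1‖ ≤ (p : ℝ)⁻¹ ^ (k + 1) := by
  obtain ⟨y, hy⟩ := dvd_unit_pow_sub_one hz k
  have hcast : (z : ℚ_[p]) ^ ((p - 1) * p ^ k) - 1 =
      ((z ^ ((p - 1) * p ^ k) - 1 : ℤ_[p]) : ℚ_[p]) := by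
    norm_cast
  rw [hcast, ← PadicInt.norm_def, hy, norm_mul, norm_pow, PadicInt.norm_p]
  exact mul_le_of_le_one_right (by positivity) y.norm_le_one

theorem inv_pow_le_norm_factorial (j : ℕ) : (p : ℝ)⁻¹ ^ j ≤ ‖(j ! : ℚ_[p])‖ := by
  have hp : (1 : ℝ) < p := mod_cast (Fact.out : p.Prime).one_lt
  rw [Padic.norm_eq_zpow_neg_valuation (mod_cast j.factorial_ne_zero), Padic.valuation_natCast,
    zpow_neg, zpow_natCast, inv_pow]
  exact inv_anti₀ (by positivity) (pow_le_pow_right₀ hp.le (padicValNat_factorial_le (p := p) j))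

open FormalMultilinearSeries

/-- `(descPochhammer ℤ j).coeff m` is the Stirling number `s(j, m)`, so this series is
`∑ⱼ Eʲ (x choose j)` expanded in powers of `x`. -/
noncomputable def binomialPowSeries (E : ℚ_[p]) : FormalMultilinearSeries ℚ_[p] ℚ_[p] ℚ_[p] :=
  ofScalars ℚ_[p] fun m => ∑' j : ℕ, E ^ j / j ! * (descPochhammer ℤ j).coeff m

theorem descPochhammer_coeff_eq_zero {R : Type*} [Ring R] [NoZeroDivisors R] [Nontrivial R]
    {j m : ℕ} (h : j < m) : (descPochhammer R j).coeff m = 0 :=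
  Polynomial.coeff_eq_zero_of_natDegree_lt (by rwa [descPochhammer_natDegree])

variable {E : ℚ_[p]}

theorem norm_pow_div_factorial_le (hE : ‖E‖ ≤ (p : ℝ)⁻¹ ^ 3) (j : ℕ) :
    ‖E ^ j / (j ! : ℚ_[p])‖ ≤ (p : ℝ)⁻¹ ^ (2 * j) := by
  rw [norm_div, norm_pow, div_le_iff₀ (norm_pos_iff.mpr (mod_cast j.factorial_ne_zero))]
  calc ‖E‖ ^ j ≤ ((p : ℝ)⁻¹ ^ 3) ^ j := pow_le_pow_left₀ (norm_nonneg E) hE j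
    _ = (p : ℝ)⁻¹ ^ (2 * j) * (p : ℝ)⁻¹ ^ j := by ring
    _ ≤ (p : ℝ)⁻¹ ^ (2 * j) * ‖(j ! : ℚ_[p])‖ := by gcongr; exact inv_pow_le_norm_factorial j

theorem norm_stirlingTerm_le (hE : ‖E‖ ≤ (p : ℝ)⁻¹ ^ 3) (j m : ℕ) :
    ‖E ^ j / j ! * (descPochhammer ℤ j).coeff m‖ ≤ (p : ℝ)⁻¹ ^ (2 * j) := by
  rw [norm_mul]
  exact mul_le_of_le_one_right (norm_nonneg _) (Padic.norm_int_le_one _) |>.trans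
    (norm_pow_div_factorial_le hE j)

theorem summable_stirlingTerm_mul_pow (hE : ‖E‖ ≤ (p : ℝ)⁻¹ ^ 3) {x : ℚ_[p]} (hx : ‖x‖ ≤ 1) :
    Summable fun jm : ℕ × ℕ =>
      E ^ jm.1 / jm.1 ! * (descPochhammer ℤ jm.1).coeff jm.2 * x ^ jm.2 := by
  have hp : (p : ℝ)⁻¹ < 1 := inv_lt_one_of_one_lt₀ (mod_cast (Fact.out : p.Prime).one_lt)
  have hgeom := summable_geometric_of_lt_one (by positivity) hp
  refine .of_norm_bounded (hgeom.mul_of_nonneg hgeom (fun _ => by positivity)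
    (fun _ => by positivity)) fun ⟨j, m⟩ => ?_
  rcases lt_or_ge j m with hjm | hmj
  · simp only [descPochhammer_coeff_eq_zero hjm, Int.cast_zero, mul_zero, zero_mul, norm_zero]
    positivity
  · rw [norm_mul, norm_pow]
    calc _ ≤ (p : ℝ)⁻¹ ^ (2 * j) * 1 :=
          mul_le_mul (norm_stirlingTerm_le hE j m) (pow_le_one₀ (norm_nonneg x) hx)
            (by positivity) (by positivity)
      _ ≤ (p : ℝ)⁻¹ ^ j * (p : ℝ)⁻¹ ^ m := by
          rw [mul_one, two_mul, pow_add]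
          gcongr (p : ℝ)⁻¹ ^ j * ?_
          exact pow_le_pow_of_le_one (by positivity) hp.le hmj

theorem norm_binomialPowSeries_coeff_le (hE : ‖E‖ ≤ (p : ℝ)⁻¹ ^ 3) (m : ℕ) :
    ‖∑' j : ℕ, E ^ j / j ! * (descPochhammer ℤ j).coeff m‖ ≤ (p : ℝ)⁻¹ ^ (2 * m) := by
  have hp : (p : ℝ)⁻¹ ≤ 1 := inv_le_one_of_one_le₀ (mod_cast (Fact.out : p.Prime).one_lt.le)
  refine IsUltrametricDist.norm_tsum_le_of_forall_le_of_nonneg (by positivity) fun j => ?_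
  rcases lt_or_ge j m with hjm | hmj
  · simp [descPochhammer_coeff_eq_zero hjm]
  · exact (norm_stirlingTerm_le hE j m).trans (pow_le_pow_of_le_one (by positivity) hp (by omega))

theorem hasFPowerSeriesOnBall_binomialPowSeries (hE : ‖E‖ ≤ (p : ℝ)⁻¹ ^ 3) :
    HasFPowerSeriesOnBall (binomialPowSeries E).sum (binomialPowSeries E) 0
      ((p : ℝ≥0) ^ 2 : ℝ≥0) := by
  have hp : p.Prime := Fact.out
  have hradius : (((p : ℝ≥0) ^ 2 : ℝ≥0) : ℝ≥0∞) ≤ (binomialPowSeries E).radius := by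
    refine le_radius_of_bound _ 1 fun m => ?_
    rw [binomialPowSeries, ofScalars_norm]
    calc _ ≤ (p : ℝ)⁻¹ ^ (2 * m) * ((p : ℝ) ^ 2) ^ m := by
          push_cast
          gcongr
          exact norm_binomialPowSeries_coeff_le hE m
      _ = 1 := by
          rw [pow_mul, ← mul_pow, inv_pow, inv_mul_cancel₀ (by simp [hp.ne_zero]), one_pow]
  have hpos : (0 : ℝ≥0∞) < ((p : ℝ≥0) ^ 2 : ℝ≥0) :=
    ENNReal.coe_pos.mpr (pow_pos (Nat.cast_pos.mpr hp.pos) 2)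
  exact ((binomialPowSeries E).hasFPowerSeriesOnBall (hpos.trans_le hradius)).mono hpos hradius

theorem binomialPowSeries_sum_natCast (hE : ‖E‖ ≤ (p : ℝ)⁻¹ ^ 3) (n : ℕ) :
    (binomialPowSeries E).sum n = (1 + E) ^ n := by
  have hrow (j : ℕ) : ∑' m, E ^ j / j ! * (descPochhammer ℤ j).coeff m * (n : ℚ_[p]) ^ m =
      n.choose j * E ^ j := by
    have heval : ∑ m ∈ Finset.range (j + 1), ((descPochhammer ℤ j).coeff m : ℚ_[p]) * n ^ m =
        j ! * n.choose j := by
      have h := descPochhammer_eval_eq_descFactorial ℤ n j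
      rw [Polynomial.eval_eq_sum_range, descPochhammer_natDegree,
        Nat.descFactorial_eq_factorial_mul_choose] at h
      exact_mod_cast h
    rw [tsum_eq_sum (s := Finset.range (j + 1)) fun m hm => by
      simp [descPochhammer_coeff_eq_zero (by simpa using hm : j < m)]]
    have hfact : (j ! : ℚ_[p]) ≠ 0 := mod_cast j.factorial_ne_zero
    simp_rw [mul_assoc, ← Finset.mul_sum, heval]
    field_simp
  calc (binomialPowSeries E).sum n
      = ∑' m, ∑' j, E ^ j / j ! * (descPochhammer ℤ j).coeff m * (n : ℚ_[p]) ^ m := by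
        simp only [binomialPowSeries, FormalMultilinearSeries.sum, ofScalars_apply_eq,
          smul_eq_mul, tsum_mul_right]
    _ = ∑' j, ∑' m, E ^ j / j ! * (descPochhammer ℤ j).coeff m * (n : ℚ_[p]) ^ m :=
        Summable.tsum_comm
          (f := fun j m => E ^ j / j ! * (descPochhammer ℤ j).coeff m * (n : ℚ_[p]) ^ m)
          (summable_stirlingTerm_mul_pow hE (IsUltrametricDist.norm_natCast_le_one ℚ_[p] n))
    _ = ∑ j ∈ Finset.range (n + 1), n.choose j * E ^ j := by
        rw [tsum_congr hrow]
        exact tsum_eq_sum fun j hj => by simp [Nat.choose_eq_zero_of_lt (by simpa using hj : n < j)]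
    _ = (1 + E) ^ n := by
        rw [add_comm (1 : ℚ_[p]) E, add_pow]
        exact Finset.sum_congr rfl fun j _ => by rw [one_pow, mul_one, mul_comm]

theorem two_lt_sq_prime : (2 : ℝ≥0∞) < ((p : ℝ≥0) ^ 2 : ℝ≥0) := by
  have hp : p.Prime := Fact.out
  exact_mod_cast (show 2 < p ^ 2 by nlinarith [hp.two_le])

theorem exists_hasFPowerSeriesOnBall_eq_sum_pow {ι : Type*} (s : Finset ι) (c : ι → ℚ_[p])
    {z : ι → ℤ_[p]} (hz : ∀ i, ‖z i‖ = 1) (r : ℕ) :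
    ∃ (f : ℚ_[p] → ℚ_[p]) (P : FormalMultilinearSeries ℚ_[p] ℚ_[p] ℚ_[p]),
      HasFPowerSeriesOnBall f P 0 ((p : ℝ≥0) ^ 2 : ℝ≥0) ∧
      ∀ q : ℕ, f q = ∑ i ∈ s, c i * (z i : ℚ_[p]) ^ ((p - 1) * p ^ 2 * q + r) := by
  set E : ι → ℚ_[p] := fun i => (z i : ℚ_[p]) ^ ((p - 1) * p ^ 2) - 1
  have hE (i : ι) : ‖E i‖ ≤ (p : ℝ)⁻¹ ^ 3 := norm_unit_pow_sub_one_le (hz i) 2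
  refine ⟨∑ i ∈ s, (c i * z i ^ r) • (binomialPowSeries (E i)).sum,
    ∑ i ∈ s, (c i * z i ^ r) • binomialPowSeries (E i),
    HasFPowerSeriesOnBall.finsetSum ((by norm_num : (0 : ℝ≥0∞) < 2).trans two_lt_sq_prime)
      fun i _ => (hasFPowerSeriesOnBall_binomialPowSeries (hE i)).const_smul, fun q => ?_⟩
  simp only [Finset.sum_apply, Pi.smul_apply, smul_eq_mul]
  refine Finset.sum_congr rfl fun i _ => ?_
  rw [binomialPowSeries_sum_natCast (hE i), add_sub_cancel, ← pow_mul, pow_add]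
  ring

end SkolemMahlerLech

theorem skolem_mahler_lech_units_general (p : ℕ) [Fact p.Prime]
    (k : ℕ) (c : Fin k → ℤ_[p]) (z : Fin k → ℤ_[p]) (hz : ∀ i, ‖z i‖ = 1)
    (a : ℕ → ℚ_[p]) (ha : ∀ n, a n = ∑ i : Fin k, (c i : ℚ_[p]) * (z i : ℚ_[p]) ^ n) :
    ∃ (S : Finset ℕ) (P : Finset (ℕ × ℕ)),
      (∀ q ∈ P, 0 < q.1) ∧
      { n : ℕ | a n = 0 } = ↑S ∪ ⋃ q ∈ P, { n : ℕ | ∃ m : ℕ, n = q.2 + q.1 * m } := by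
  have hp : p.Prime := Fact.out
  refine exists_finset_union_progressions (N := (p - 1) * p ^ 2)
    (Nat.mul_pos (Nat.sub_pos_of_lt hp.one_lt) (pow_pos hp.pos 2)) fun r => ?_
  obtain ⟨f, P, hf, hfq⟩ := SkolemMahlerLech.exists_hasFPowerSeriesOnBall_eq_sum_pow
    Finset.univ (fun i => (c i : ℚ_[p])) hz r
  simpa only [Set.mem_ofPred_eq, ha, ← hfq] using
    hf.finite_natCast_zeros_or_forall SkolemMahlerLech.two_lt_sq_prime

/-- Skolem–Mahler–Lech for `ℚ_p` with unit roots: if `a_n = Σ_{i=1}^k c_i z_i^n` with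
`c_i ∈ ℤ_p` and `z_i ∈ ℤ_p^×` `p`-adic units, `p > 2`, then `{n : a_n = 0}` is the union
of a finite set and finitely many arithmetic progressions. -/
theorem skolem_mahler_lech_units (p : ℕ) [Fact p.Prime] (hp : 2 < p)
    (k : ℕ) (c : Fin k → ℤ_[p]) (z : Fin k → ℤ_[p]) (hz : ∀ i, ‖z i‖ = 1)
    (a : ℕ → ℚ_[p]) (ha : ∀ n, a n = ∑ i : Fin k, (c i : ℚ_[p]) * (z i : ℚ_[p]) ^ n) :
    ∃ (S : Finset ℕ) (P : Finset (ℕ × ℕ)),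
      (∀ q ∈ P, 0 < q.1) ∧
      { n : ℕ | a n = 0 } = ↑S ∪ ⋃ q ∈ P, { n : ℕ | ∃ m : ℕ, n = q.2 + q.1 * m } :=
  skolem_mahler_lech_units_general p k c z hz a ha
end

section
/- (Bounded period of invariant subvarieties under uniformization) Let X be a projective variety over Q_p, U ⊆ X(Q_p) a p-adic analytic neighbourhood identified with Z_p^n, and f: U → U an analytic map such that there is l ≥ 1 and for each x ∈ U an analytic G_x: Z_p → Z_p^n with G_x(k) = f^{∘lk}(x) for k ∈ N. Let Y ⊆ X be a closed subvariety with f^{∘N}(Y ∩ U) ⊆ Y for some N ≥ 1, and with Y ∩ U infinite along orbits (each x ∈ Y ∩ U has f^{∘i}(x) ∈ Y for infinitely many i). Then f^{∘l}(Y ∩ U) ⊆ Y, i.e., the period of Y divides l, independently of Y. -/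
/-!
Along the orbit of `x`, `P(f^{∘lk}(x)) = P(G_x(k))` for each polynomial `P` cutting out `Y`, and
`z ↦ P(G_x(z))` is given on the closed unit ball by a power series whose coefficients tend to
zero. Invariance of `Y` under `f^{∘N}` makes it vanish at every `z ∈ Nℕ`, infinitely many points,
so by Strassmann's theorem the series is zero; at `z = 1` this says `P(f^{∘l}(x)) = 0`.

Strassmann's theorem goes by induction on the Weierstrass degree `N` of the series (the last index
of a coefficient of maximal norm): for `N = 0` the constant term dominates, so there is no zero;
otherwise, at a zero `z₀` one writes `F = F(z₀) + (X - z₀) H` with `H` of degree `N - 1`.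
-/

open Filter Topology

theorem IsUltrametricDist.norm_tsum_lt_of_forall_norm_lt {E ι : Type*}
    [SeminormedAddCommGroup E] [IsUltrametricDist E] {f : ι → E}
    (hf : Tendsto f cofinite (𝓝 0)) {C : ℝ} (hC : 0 < C) (h : ∀ i, ‖f i‖ < C) :
    ‖∑' i, f i‖ < C := by
  have hfin : {i | ¬ ‖f i‖ < C / 2}.Finite :=
    eventually_cofinite.1 ((tendsto_zero_iff_norm_tendsto_zero.1 hf).eventually
      (gt_mem_nhds (half_pos hC)))
  -- the norms tend to zero, so above `C / 2` they attain their supremum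
  obtain ⟨C', hC'C, hC'0, hle⟩ : ∃ C' < C, 0 ≤ C' ∧ ∀ i, ‖f i‖ ≤ C' := by
    rcases Set.eq_empty_or_nonempty {i | ¬ ‖f i‖ < C / 2} with hempty | hne
    · exact ⟨C / 2, half_lt_self hC, by positivity, fun i =>
        (not_not.1 fun hi => Set.eq_empty_iff_forall_notMem.1 hempty i hi).le⟩
    · obtain ⟨i₀, -, hi₀⟩ := Set.exists_max_image _ (fun i => ‖f i‖) hfin hne
      refine ⟨max (C / 2) ‖f i₀‖, max_lt (half_lt_self hC) (h i₀), by positivity, fun i => ?_⟩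
      by_cases hi : ‖f i‖ < C / 2
      · exact le_max_of_le_left hi.le
      · exact le_max_of_le_right (hi₀ i hi)
  exact (norm_tsum_le_of_forall_le_of_nonneg hC'0 hle).trans_lt hC'C

namespace PowerSeries

section Semiring

variable {R : Type*} [Semiring R]

noncomputable def shift (k : ℕ) (F : R⟦X⟧) : R⟦X⟧ := mk fun m => coeff (m + k) F

@[simp]
theorem coeff_shift (k m : ℕ) (F : R⟦X⟧) : coeff m (shift k F) = coeff (m + k) F :=
  coeff_mk _ _

theorem shift_one_shift (k : ℕ) (F : R⟦X⟧) : shift 1 (shift k F) = shift (k + 1) F := by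
  ext m
  simp only [coeff_shift, add_assoc, add_comm 1 k]

end Semiring

section NormedRing

variable {R : Type*} [NormedRing R]

theorem isRestricted_one_iff {F : R⟦X⟧} :
    IsRestricted 1 F ↔ Tendsto (fun n => coeff n F) cofinite (𝓝 0) := by
  simp [isRestricted_iff, tendsto_zero_iff_norm_tendsto_zero]

theorem isRestricted_shift {F : R⟦X⟧} (hF : IsRestricted 1 F) (k : ℕ) :
    IsRestricted 1 (shift k F) := by
  rw [isRestricted_one_iff, Nat.cofinite_eq_atTop] at hF ⊢
  simpa [Function.comp_def] using hF.comp (tendsto_add_atTop_nat k)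

theorem isRestricted_X : IsRestricted 1 (X : R⟦X⟧) :=
  X_eq (R := R) ▸ isRestricted_monomial 1 1 1

theorem isRestricted_X_sub_C (a : R) : IsRestricted 1 (X - C a) := by
  simpa [sub_eq_add_neg] using
    isRestricted.add 1 isRestricted_X (isRestricted.neg 1 (isRestricted_C 1 a))

/-- `N` is the Weierstrass degree of `F`; by Strassmann's theorem, a restricted `F` has at most
`N` zeros in the closed unit ball. -/
def IsStrassmannIndex (F : R⟦X⟧) (N : ℕ) : Prop :=
  coeff N F ≠ 0 ∧ (∀ n, ‖coeff n F‖ ≤ ‖coeff N F‖) ∧ ∀ n, N < n → ‖coeff n F‖ < ‖coeff N F‖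

theorem exists_isStrassmannIndex {F : R⟦X⟧} (hF : IsRestricted 1 F) (hF₀ : F ≠ 0) :
    ∃ N, IsStrassmannIndex F N := by
  obtain ⟨n₀, hn₀⟩ : ∃ n₀, coeff n₀ F ≠ 0 := by
    by_contra! h
    exact hF₀ (ext fun n => by simpa using h n)
  have hfin : {n | ¬ ‖coeff n F‖ < ‖coeff n₀ F‖}.Finite :=
    eventually_cofinite.1 <| (tendsto_zero_iff_norm_tendsto_zero.1
      (isRestricted_one_iff.1 hF)).eventually (gt_mem_nhds (norm_pos_iff.2 hn₀))
  -- maximize the norm first and the index second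
  obtain ⟨N, hN, hmax⟩ := Set.exists_max_image _ (fun n => toLex (‖coeff n F‖, n)) hfin
    ⟨n₀, lt_irrefl _⟩
  have hN₀ : ‖coeff n₀ F‖ ≤ ‖coeff N F‖ := not_lt.1 hN
  have hdom : ∀ n, ‖coeff n F‖ < ‖coeff N F‖ ∨ ‖coeff n F‖ = ‖coeff N F‖ ∧ n ≤ N := by
    intro n
    by_cases hn : ‖coeff n F‖ < ‖coeff n₀ F‖
    · exact Or.inl (hn.trans_le hN₀)
    · exact Prod.Lex.le_iff.1 (hmax n hn)
  refine ⟨N, norm_pos_iff.1 ((norm_pos_iff.2 hn₀).trans_le hN₀), fun n => ?_, fun n hn => ?_⟩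
  · rcases hdom n with h | h
    exacts [h.le, h.1.le]
  · rcases hdom n with h | h
    exacts [h, absurd h.2 (not_le.2 hn)]

end NormedRing

section NormedField

variable {K : Type*} [NormedField K]

theorem norm_mul_pow_le_norm (a : K) {z : K} (hz : ‖z‖ ≤ 1) (n : ℕ) : ‖a * z ^ n‖ ≤ ‖a‖ := by
  rw [norm_mul, norm_pow]
  exact mul_le_of_le_one_right (norm_nonneg a) (pow_le_one₀ (norm_nonneg z) hz)

/-- Meaningful for restricted `F` and `‖z‖ ≤ 1`; elsewhere the series may diverge and the value
is the junk `0`. -/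
noncomputable def restrictedEval (F : K⟦X⟧) (z : K) : K := ∑' n, coeff n F * z ^ n

theorem IsRestricted.tendsto_coeff_mul_pow {F : K⟦X⟧} (hF : IsRestricted 1 F) {z : K}
    (hz : ‖z‖ ≤ 1) : Tendsto (fun n => coeff n F * z ^ n) cofinite (𝓝 0) :=
  squeeze_zero_norm (fun n => norm_mul_pow_le_norm _ hz n)
    (tendsto_zero_iff_norm_tendsto_zero.1 (isRestricted_one_iff.1 hF))

@[simp]
theorem restrictedEval_C (a : K) (z : K) : restrictedEval (C a) z = a := by
  rw [restrictedEval, tsum_eq_single 0 fun n hn => by simp [coeff_C, hn]]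
  simp

@[simp]
theorem restrictedEval_X (z : K) : restrictedEval X z = z := by
  rw [restrictedEval, tsum_eq_single 1 fun n hn => by simp [coeff_X, hn]]
  simp

noncomputable def divXSubC (F : K⟦X⟧) (z₀ : K) : K⟦X⟧ :=
  mk fun k => restrictedEval (shift (k + 1) F) z₀

end NormedField

section Ultrametric

variable {K : Type*} [NormedField K] [IsUltrametricDist K]

theorem norm_restrictedEval_le {F : K⟦X⟧} {z : K} (hz : ‖z‖ ≤ 1) {C : ℝ} (hC : 0 ≤ C)
    (h : ∀ n, ‖coeff n F‖ ≤ C) : ‖restrictedEval F z‖ ≤ C :=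
  IsUltrametricDist.norm_tsum_le_of_forall_le_of_nonneg hC fun n =>
    (norm_mul_pow_le_norm _ hz n).trans (h n)

theorem norm_restrictedEval_lt {F : K⟦X⟧} (hF : IsRestricted 1 F) {z : K} (hz : ‖z‖ ≤ 1)
    {C : ℝ} (hC : 0 < C) (h : ∀ n, ‖coeff n F‖ < C) : ‖restrictedEval F z‖ < C :=
  IsUltrametricDist.norm_tsum_lt_of_forall_norm_lt (hF.tendsto_coeff_mul_pow hz) hC fun n =>
    (norm_mul_pow_le_norm _ hz n).trans_lt (h n)

theorem isRestricted_divXSubC {F : K⟦X⟧} (hF : IsRestricted 1 F) {z₀ : K} (hz₀ : ‖z₀‖ ≤ 1) :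
    IsRestricted 1 (divXSubC F z₀) := by
  rw [isRestricted_one_iff, Nat.cofinite_eq_atTop, NormedAddGroup.tendsto_nhds_zero] at hF ⊢
  intro ε hε
  obtain ⟨k₀, hk₀⟩ := eventually_atTop.1 (hF (ε / 2) (half_pos hε))
  filter_upwards [eventually_ge_atTop k₀] with k hk
  rw [divXSubC, coeff_mk]
  refine (norm_restrictedEval_le hz₀ (half_pos hε).le fun m => ?_).trans_lt (half_lt_self hε)
  simpa using (hk₀ _ (by omega)).le

theorem isRestricted_aeval {σ : Type*} {g : σ → K⟦X⟧} (hg : ∀ i, IsRestricted 1 (g i))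
    (P : MvPolynomial σ K) : IsRestricted 1 (MvPolynomial.aeval g P) := by
  induction P using MvPolynomial.induction_on with
  | C a => simpa using isRestricted_C 1 a
  | add P Q hP hQ => simpa using isRestricted.add 1 hP hQ
  | mul_X P i hP => simpa using isRestricted.mul 1 hP (hg i)

end Ultrametric

section Complete

variable {K : Type*} [NormedField K] [IsUltrametricDist K] [CompleteSpace K]

theorem summable_coeff_mul_pow {F : K⟦X⟧} (hF : IsRestricted 1 F) {z : K} (hz : ‖z‖ ≤ 1) :
    Summable fun n => coeff n F * z ^ n :=
  NonarchimedeanAddGroup.summable_of_tendsto_cofinite_zero (hF.tendsto_coeff_mul_pow hz)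

variable {F G : K⟦X⟧} {z : K}

theorem restrictedEval_add (hF : IsRestricted 1 F) (hG : IsRestricted 1 G) (hz : ‖z‖ ≤ 1) :
    restrictedEval (F + G) z = restrictedEval F z + restrictedEval G z := by
  simp only [restrictedEval, map_add, add_mul]
  exact (summable_coeff_mul_pow hF hz).tsum_add (summable_coeff_mul_pow hG hz)

theorem restrictedEval_sub (hF : IsRestricted 1 F) (hG : IsRestricted 1 G) (hz : ‖z‖ ≤ 1) :
    restrictedEval (F - G) z = restrictedEval F z - restrictedEval G z := by
  simp only [restrictedEval, map_sub, sub_mul]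
  exact (summable_coeff_mul_pow hF hz).tsum_sub (summable_coeff_mul_pow hG hz)

theorem restrictedEval_mul (hF : IsRestricted 1 F) (hG : IsRestricted 1 G) (hz : ‖z‖ ≤ 1) :
    restrictedEval (F * G) z = restrictedEval F z * restrictedEval G z := by
  have hprod := NonarchimedeanAddGroup.summable_of_tendsto_cofinite_zero
    (tendsto_mul_cofinite_nhds_zero (hF.tendsto_coeff_mul_pow hz) (hG.tendsto_coeff_mul_pow hz))
  rw [restrictedEval, restrictedEval, restrictedEval,
    (summable_coeff_mul_pow hF hz).tsum_mul_tsum_eq_tsum_sum_antidiagonal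
      (summable_coeff_mul_pow hG hz) hprod]
  refine tsum_congr fun n => ?_
  rw [coeff_mul, Finset.sum_mul]
  refine Finset.sum_congr rfl fun ij hij => ?_
  rw [← Finset.HasAntidiagonal.mem_antidiagonal.1 hij, pow_add]
  ring

theorem restrictedEval_eq_coeff_zero_add (hF : IsRestricted 1 F) (hz : ‖z‖ ≤ 1) :
    restrictedEval F z = coeff 0 F + z * restrictedEval (shift 1 F) z := by
  rw [restrictedEval, (summable_coeff_mul_pow hF hz).tsum_eq_zero_add, restrictedEval,
    ← tsum_mul_left]
  simp only [coeff_shift, pow_zero, mul_one, pow_succ]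
  congr 1
  exact tsum_congr fun n => by ring

theorem C_add_X_sub_C_mul_divXSubC (hF : IsRestricted 1 F) {z₀ : K} (hz₀ : ‖z₀‖ ≤ 1) :
    C (restrictedEval F z₀) + (X - C z₀) * divXSubC F z₀ = F := by
  ext k
  rcases k with _ | k
  · simp [divXSubC, sub_mul, restrictedEval_eq_coeff_zero_add hF hz₀]
  · simp [divXSubC, sub_mul, coeff_C_mul,
      restrictedEval_eq_coeff_zero_add (isRestricted_shift hF (k + 1)) hz₀, shift_one_shift]

theorem restrictedEval_sub_restrictedEval (hF : IsRestricted 1 F) (hz : ‖z‖ ≤ 1) {z₀ : K}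
    (hz₀ : ‖z₀‖ ≤ 1) :
    restrictedEval F z - restrictedEval F z₀ = (z - z₀) * restrictedEval (divXSubC F z₀) z := by
  have hH := isRestricted_divXSubC hF hz₀
  have h := congrArg (restrictedEval · z) (C_add_X_sub_C_mul_divXSubC hF hz₀)
  rw [restrictedEval_add (isRestricted_C 1 _) (isRestricted.mul 1 (isRestricted_X_sub_C z₀) hH) hz,
    restrictedEval_mul (isRestricted_X_sub_C z₀) hH hz,
    restrictedEval_sub isRestricted_X (isRestricted_C 1 z₀) hz, restrictedEval_C, restrictedEval_X,
    restrictedEval_C] at h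
  rw [← h]
  ring

theorem norm_restrictedEval_eq_norm_coeff_zero (hF : IsRestricted 1 F) (hz : ‖z‖ ≤ 1)
    (h : ∀ n, 0 < n → ‖coeff n F‖ < ‖coeff 0 F‖) : ‖restrictedEval F z‖ = ‖coeff 0 F‖ := by
  have htail : ‖z * restrictedEval (shift 1 F) z‖ < ‖coeff 0 F‖ :=
    calc ‖z * restrictedEval (shift 1 F) z‖ ≤ ‖restrictedEval (shift 1 F) z‖ := by
          rw [norm_mul]
          exact mul_le_of_le_one_left (norm_nonneg _) hz
      _ < ‖coeff 0 F‖ :=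
          norm_restrictedEval_lt (isRestricted_shift hF 1) hz
            ((norm_nonneg _).trans_lt (h 1 one_pos)) fun n => by simpa using h (n + 1) n.succ_pos
  rw [restrictedEval_eq_coeff_zero_add hF hz,
    IsUltrametricDist.norm_add_eq_max_of_norm_ne_norm htail.ne', max_eq_left htail.le]

theorem isStrassmannIndex_divXSubC (hF : IsRestricted 1 F) {z₀ : K} (hz₀ : ‖z₀‖ ≤ 1) {N : ℕ}
    (hN : IsStrassmannIndex F (N + 1)) : IsStrassmannIndex (divXSubC F z₀) N := by
  obtain ⟨hN₀, hle, hlt⟩ := hN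
  have hcoeff : ∀ k, coeff k (divXSubC F z₀) = restrictedEval (shift (k + 1) F) z₀ :=
    fun k => coeff_mk _ _
  have hnorm : ‖coeff N (divXSubC F z₀)‖ = ‖coeff (N + 1) F‖ := by
    rw [hcoeff, norm_restrictedEval_eq_norm_coeff_zero (isRestricted_shift hF _) hz₀, coeff_shift,
      zero_add]
    intro n hn
    simpa using hlt (n + (N + 1)) (by omega)
  refine ⟨fun h => hN₀ (norm_eq_zero.1 (hnorm ▸ norm_eq_zero.2 h)), fun k => ?_, fun k hk => ?_⟩
  · rw [hnorm, hcoeff]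
    exact norm_restrictedEval_le hz₀ (norm_nonneg _) fun m => hle _
  · rw [hnorm, hcoeff]
    exact norm_restrictedEval_lt (isRestricted_shift hF _) hz₀ (norm_pos_iff.2 hN₀)
      fun m => hlt _ (by omega)

theorem finite_zeros_of_isStrassmannIndex (hF : IsRestricted 1 F) {N : ℕ}
    (hN : IsStrassmannIndex F N) : {z : K | ‖z‖ ≤ 1 ∧ restrictedEval F z = 0}.Finite := by
  induction N generalizing F with
  | zero =>
    refine Set.finite_empty.subset fun z ⟨hz, hFz⟩ => hN.1 ?_
    rw [← norm_eq_zero, ← norm_restrictedEval_eq_norm_coeff_zero hF hz hN.2.2, hFz, norm_zero]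
  | succ N ih =>
    rcases Set.eq_empty_or_nonempty {z : K | ‖z‖ ≤ 1 ∧ restrictedEval F z = 0}
      with h | ⟨z₀, hz₀, hFz₀⟩
    · simp [h]
    refine ((ih (isRestricted_divXSubC hF hz₀) (isStrassmannIndex_divXSubC hF hz₀ hN)).insert
      z₀).subset fun z ⟨hz, hFz⟩ => ?_
    rcases eq_or_ne z z₀ with rfl | hne
    · exact Set.mem_insert z _
    have hfactor := restrictedEval_sub_restrictedEval hF hz hz₀
    rw [hFz, hFz₀, sub_self, eq_comm, mul_eq_zero, sub_eq_zero] at hfactor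
    exact Set.mem_insert_of_mem _ ⟨hz, hfactor.resolve_left hne⟩

/-- Strassmann's theorem. -/
theorem eq_zero_of_infinite_zeros (hF : IsRestricted 1 F)
    (h : {z : K | ‖z‖ ≤ 1 ∧ restrictedEval F z = 0}.Infinite) : F = 0 := by
  by_contra hF₀
  obtain ⟨N, hN⟩ := exists_isStrassmannIndex hF hF₀
  exact h (finite_zeros_of_isStrassmannIndex hF hN)

theorem restrictedEval_aeval {σ : Type*} {g : σ → K⟦X⟧} (hg : ∀ i, IsRestricted 1 (g i))
    (hz : ‖z‖ ≤ 1) (P : MvPolynomial σ K) :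
    restrictedEval (MvPolynomial.aeval g P) z =
      MvPolynomial.eval (fun i => restrictedEval (g i) z) P := by
  induction P using MvPolynomial.induction_on with
  | C a => simp
  | add P Q hP hQ =>
    rw [map_add, restrictedEval_add (isRestricted_aeval hg P) (isRestricted_aeval hg Q) hz, hP, hQ,
      map_add]
  | mul_X P i hP =>
    rw [map_mul, restrictedEval_mul (isRestricted_aeval hg P) (by simpa using hg i) hz, hP]
    simp

theorem eval_restrictedEval_eq_zero_of_infinite {σ : Type*} {g : σ → K⟦X⟧}
    (hg : ∀ i, IsRestricted 1 (g i)) (P : MvPolynomial σ K)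
    (h : {z : K | ‖z‖ ≤ 1 ∧ MvPolynomial.eval (fun i => restrictedEval (g i) z) P = 0}.Infinite)
    (hz : ‖z‖ ≤ 1) : MvPolynomial.eval (fun i => restrictedEval (g i) z) P = 0 := by
  have hzero : MvPolynomial.aeval g P = 0 := by
    refine eq_zero_of_infinite_zeros (isRestricted_aeval hg P) (h.mono ?_)
    rintro w ⟨hw, hPw⟩
    exact ⟨hw, by rwa [restrictedEval_aeval hg hw]⟩
  rw [← restrictedEval_aeval hg hz, hzero]
  simp [restrictedEval]

end Complete

end PowerSeries

theorem invariant_subvariety_bounded_period_general (p : ℕ) [Fact p.Prime] (n : ℕ)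
    (f : (Fin n → ℤ_[p]) → (Fin n → ℤ_[p])) (l : ℕ)
    (hunif : ∀ x : Fin n → ℤ_[p], ∃ b : ℕ → Fin n → ℚ_[p],
      (∀ i, Filter.Tendsto (fun k => ‖b k i‖) Filter.atTop (nhds 0)) ∧
      ∀ (k : ℕ) (i : Fin n),
        (f^[l * k] x i : ℚ_[p]) = ∑' j : ℕ, b j i * ((k : ℤ_[p]) : ℚ_[p]) ^ j)
    (Ps : Set (MvPolynomial (Fin n) ℚ_[p]))
    (Y : Set (Fin n → ℤ_[p]))
    (hY : Y = { x | ∀ P ∈ Ps, MvPolynomial.eval (fun i => (x i : ℚ_[p])) P = 0 })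
    (N : ℕ) (hN : 0 < N) (hinv : ∀ x ∈ Y, f^[N] x ∈ Y) :
    ∀ x ∈ Y, f^[l] x ∈ Y := by
  intro x hx
  obtain ⟨b, hb, hbf⟩ := hunif x
  set G : Fin n → PowerSeries ℚ_[p] := fun i => PowerSeries.mk (b · i)
  have hG : ∀ i, (G i).IsRestricted 1 := fun i =>
    (PowerSeries.isRestricted_iff' 1 _).2 (by simpa [G] using hb i)
  have horbit (k : ℕ) :
      (fun i => (f^[l * k] x i : ℚ_[p])) = fun i => PowerSeries.restrictedEval (G i) k := by
    simp [G, PowerSeries.restrictedEval, hbf]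
  have hmem (k : ℕ) : f^[l * (N * k)] x ∈ Y := by
    rw [mul_left_comm, Function.iterate_mul]
    exact Set.MapsTo.iterate hinv (l * k) hx
  have hinj : Function.Injective fun k : ℕ => ((N * k : ℕ) : ℚ_[p]) :=
    Nat.cast_injective.comp (mul_right_injective₀ hN.ne')
  rw [hY] at hmem ⊢
  intro P hP
  rw [← mul_one l, horbit 1, Nat.cast_one]
  refine PowerSeries.eval_restrictedEval_eq_zero_of_infinite hG P
    ((Set.infinite_range_of_injective hinj).mono ?_) norm_one.le
  rintro _ ⟨k, rfl⟩
  refine ⟨IsUltrametricDist.norm_natCast_le_one ℚ_[p] (N * k), ?_⟩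
  rw [← horbit]
  exact hmem k P hP

/-- Bounded period of invariant subvarieties under uniformization: let
`U = ℤ_p^n` be a `p`-adic analytic neighbourhood in a projective variety, `f : U → U`
an analytic map such that for some `l ≥ 1` every orbit is uniformized: for each `x ∈ U`
there is a `p`-adic analytic `G_x : ℤ_p → ℚ_p^n` with `G_x(k) = f^{∘lk}(x)` for `k ∈ ℕ`.
Let `Y` be the subvariety of `U` cut out by a set `Ps` of polynomials, with
`f^{∘N}(Y) ⊆ Y` for some `N ≥ 1`, and suppose each `x ∈ Y` has `f^{∘i}(x) ∈ Y` for
infinitely many `i`.  Then `f^{∘l}(Y) ⊆ Y`: the period of `Y` divides `l`,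
independently of `Y`. -/
theorem invariant_subvariety_bounded_period (p : ℕ) [Fact p.Prime] (n : ℕ)
    (f : (Fin n → ℤ_[p]) → (Fin n → ℤ_[p])) (l : ℕ) (hl : 0 < l)
    (hunif : ∀ x : Fin n → ℤ_[p], ∃ b : ℕ → Fin n → ℚ_[p],
      (∀ i, Filter.Tendsto (fun k => ‖b k i‖) Filter.atTop (nhds 0)) ∧
      ∀ (k : ℕ) (i : Fin n),
        (f^[l * k] x i : ℚ_[p]) = ∑' j : ℕ, b j i * ((k : ℤ_[p]) : ℚ_[p]) ^ j)
    (Ps : Set (MvPolynomial (Fin n) ℚ_[p]))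
    (Y : Set (Fin n → ℤ_[p]))
    (hY : Y = { x | ∀ P ∈ Ps, MvPolynomial.eval (fun i => (x i : ℚ_[p])) P = 0 })
    (N : ℕ) (hN : 0 < N) (hinv : ∀ x ∈ Y, f^[N] x ∈ Y)
    (hrec : ∀ x ∈ Y, { i : ℕ | f^[i] x ∈ Y }.Infinite) :
    ∀ x ∈ Y, f^[l] x ∈ Y :=
  invariant_subvariety_bounded_period_general p n f l hunif Ps Y hY N hN hinv
end

section
/- (Eisenstein-type integrality) Let K be a number field with ring of integers O_K, and let y = Σ a_n x^n ∈ K[[x]] be a formal power series algebraic over K(x) (satisfying a polynomial P(x, y) = 0 with P ∈ K[x, y], ∂P/∂y(0, a_0) ≠ 0). Then there exists a nonzero integer D such that D^{n+1} a_n ∈ O_K for all n; in particular, for all but finitely many primes p of O_K, all coefficients a_n are p-integral. -/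
/-!
Write `a₀` for the constant term of `y` and `c = ∂P/∂Y(0, a₀)`. Translating `Y ↦ Y + a₀`,
`z = y - a₀` is a root without constant term of a polynomial whose `Y`-linear coefficient has
constant term `c`. After clearing denominators (which multiplies `c` by an integer), the
substitution `Q(x, Y) ↦ c⁻² Q(c² x, c Y)` produces a polynomial with integral coefficients whose
`Y`-linear coefficient has constant term `1`, and `w(x) = c⁻¹ z(c² x)` is a root of it. Now the
coefficient of `xⁿ` in `Q(x, w) = 0` expresses `wₙ` as a polynomial with integral coefficients in
`w₁, …, wₙ₋₁` (a Newton step), so all `wₙ = c²ⁿ⁻¹ zₙ` are integral. If `u ∈ ℤ` makes `u a₀`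
and `u c⁻¹` (for this new `c`) integral, then `D = u³` works.
-/

open Polynomial

theorem Polynomial.eval_mem_of_coeff_mem {T σ : Type*} [Semiring T] [SetLike σ T]
    [SubsemiringClass σ T] {A : σ} {p : T[X]} (hp : ∀ j, p.coeff j ∈ A) {x : T} (hx : x ∈ A) :
    p.eval x ∈ A := by
  rw [eval_eq_sum_range]
  exact sum_mem fun j _ ↦ mul_mem (hp j) (pow_mem hx j)

section NumberField

variable {K : Type*} [Field K] [NumberField K]

theorem exists_int_smul_coeff_coeff_isIntegral (P : K[X][X]) :
    ∃ u : ℤ, u ≠ 0 ∧ ∀ j i, IsIntegral ℤ (u • (P.coeff j).coeff i) := by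
  classical
  obtain ⟨u, hu, hint⟩ :=
    exists_integral_multiples ℤ ℚ (P.support.biUnion fun j ↦ (P.coeff j).coeffs)
  refine ⟨u, hu, fun j i ↦ ?_⟩
  by_cases h : (P.coeff j).coeff i = 0
  · rw [h, smul_zero]
    exact isIntegral_zero
  · refine hint _ (Finset.mem_biUnion.2 ⟨j, ?_, coeff_mem_coeffs h⟩)
    exact mem_support_iff.2 fun hj ↦ h (by rw [hj, coeff_zero])

theorem exists_int_pow_succ_mul_isIntegral {a : ℕ → K} {γ : K} (hγ : γ ≠ 0)
    (h : ∀ n ≠ 0, IsIntegral ℤ (γ⁻¹ * (γ ^ 2) ^ n * a n)) :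
    ∃ D : ℤ, D ≠ 0 ∧ ∀ n, IsIntegral ℤ (D ^ (n + 1) * a n) := by
  classical
  obtain ⟨u, hu, hint⟩ := exists_integral_multiples ℤ ℚ {γ⁻¹, a 0}
  have hγu : IsIntegral ℤ ((u : K) * γ⁻¹) := by simpa using hint γ⁻¹ (by simp)
  have hau : IsIntegral ℤ ((u : K) * a 0) := by simpa using hint (a 0) (by simp)
  have huK : IsIntegral ℤ (u : K) := isIntegral_algebraMap (R := ℤ) (A := K) (x := u)
  refine ⟨u ^ 3, pow_ne_zero 3 hu, fun n ↦ ?_⟩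
  rcases n with _ | m
  · rw [show ((u ^ 3 : ℤ) : K) ^ (0 + 1) * a 0 = u ^ 2 * (u * a 0) by push_cast; ring]
    exact (huK.pow 2).mul hau
  · rw [show ((u ^ 3 : ℤ) : K) ^ (m + 1 + 1) * a (m + 1) =
        u ^ (m + 5) * (u * γ⁻¹) ^ (2 * m + 1) * (γ⁻¹ * (γ ^ 2) ^ (m + 1) * a (m + 1)) by
      push_cast; rw [mul_pow, inv_pow, ← pow_mul]; field_simp; ring]
    exact ((huK.pow _).mul (hγu.pow _)).mul (h _ m.succ_ne_zero)

end NumberField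

namespace PowerSeries

section CommSemiring

variable {S : Type*} [CommSemiring S]

theorem constantCoeff_eval (Q : S⟦X⟧[X]) (f : S⟦X⟧) :
    constantCoeff (Q.eval f) = (Q.map constantCoeff).eval (constantCoeff f) := by
  rw [eval_map, ← eval₂_id, hom_eval₂, RingHom.comp_id]

theorem constantCoeff_coeff_zero_eq_zero_of_eval_eq_zero {Q : S⟦X⟧[X]} {f : S⟦X⟧}
    (hf0 : constantCoeff f = 0) (hf : Q.eval f = 0) : constantCoeff (Q.coeff 0) = 0 := by
  have := constantCoeff_eval Q f
  rwa [hf, hf0, map_zero, ← Polynomial.coeff_zero_eq_eval_zero, Polynomial.coeff_map,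
    eq_comm] at this

end CommSemiring

section CommRing

variable {S : Type*} [CommRing S]

noncomputable def withCoeffsIn (R : Subring S) : Subring S⟦X⟧ := (map R.subtype).range

theorem mem_withCoeffsIn {R : Subring S} {f : S⟦X⟧} :
    f ∈ withCoeffsIn R ↔ ∀ n, coeff n f ∈ R := by
  constructor
  · rintro ⟨g, rfl⟩ n
    simp [coeff_map]
  · intro h
    exact ⟨mk fun n ↦ ⟨coeff n f, h n⟩, by ext; simp⟩

theorem trunc_mem_withCoeffsIn {R : Subring S} {f : S⟦X⟧} {n : ℕ}
    (h : ∀ k < n, coeff k f ∈ R) : (trunc n f : S⟦X⟧) ∈ withCoeffsIn R := by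
  refine mem_withCoeffsIn.2 fun k ↦ ?_
  rw [Polynomial.coeff_coe, coeff_trunc]
  split_ifs with hk
  · exact h k hk
  · exact R.zero_mem

/-- Since `w - trunc n w = O(xⁿ)` with `n ≥ 1`, in degree `n` the Taylor expansion of `Q` at
`trunc n w` only sees `Q(trunc n w)` and the linear term. -/
theorem coeff_mul_eval_trunc_eq_neg {Q : S⟦X⟧[X]} {w : S⟦X⟧} (hw0 : constantCoeff w = 0)
    (hw : Q.eval w = 0) {n : ℕ} (hn : n ≠ 0) :
    constantCoeff (Q.coeff 1) * coeff n w = -coeff n (Q.eval (trunc n w : S⟦X⟧)) := by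
  set T : S⟦X⟧ := (trunc n w : S⟦X⟧)
  set s : S⟦X⟧ := mk fun i ↦ coeff (i + n) w
  have hsplit : T + X ^ n * s = w := by rw [add_comm]; exact (eq_X_pow_mul_shift_add_trunc n w).symm
  obtain ⟨k, hk⟩ := Q.binomExpansion T (X ^ n * s)
  rw [hsplit, hw] at hk
  have hT0 : constantCoeff T = 0 := by
    rw [← coeff_zero_eq_constantCoeff_apply, Polynomial.coeff_coe, coeff_trunc]
    split_ifs <;> simp [hw0]
  have hQ'T : constantCoeff (Q.derivative.eval T) = constantCoeff (Q.coeff 1) := by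
    rw [constantCoeff_eval, hT0, ← Polynomial.coeff_zero_eq_eval_zero, Polynomial.coeff_map,
      Polynomial.coeff_derivative]
    simp
  have hlin : coeff n (Q.derivative.eval T * (X ^ n * s)) =
      constantCoeff (Q.coeff 1) * coeff n w := by
    rw [mul_left_comm, coeff_X_pow_mul', if_pos le_rfl, Nat.sub_self,
      coeff_zero_eq_constantCoeff_apply, map_mul, hQ'T, constantCoeff_mk, zero_add]
  have hquad : coeff n (k * (X ^ n * s) ^ 2) = 0 := by
    rw [mul_pow, ← pow_mul, mul_left_comm, coeff_X_pow_mul', if_neg (by omega)]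
  have hcoeff := congrArg (coeff n) hk
  rw [map_zero, map_add, map_add, hlin, hquad, add_zero] at hcoeff
  linear_combination -hcoeff

theorem mem_withCoeffsIn_of_eval_eq_zero {R : Subring S} {Q : S⟦X⟧[X]}
    (hQ : ∀ j, Q.coeff j ∈ withCoeffsIn R) (hQ1 : constantCoeff (Q.coeff 1) = 1) {w : S⟦X⟧}
    (hw0 : constantCoeff w = 0) (hw : Q.eval w = 0) : w ∈ withCoeffsIn R := by
  refine mem_withCoeffsIn.2 fun n ↦ ?_
  induction n using Nat.strong_induction_on with
  | _ n ih =>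
  rcases eq_or_ne n 0 with rfl | hn
  · rw [coeff_zero_eq_constantCoeff_apply, hw0]
    exact R.zero_mem
  · have hrec := coeff_mul_eval_trunc_eq_neg hw0 hw hn
    rw [hQ1, one_mul] at hrec
    rw [hrec]
    exact R.neg_mem <| mem_withCoeffsIn.1 (eval_mem_of_coeff_mem hQ (trunc_mem_withCoeffsIn ih)) n

end CommRing

section Field

variable {K : Type*} [Field K]

/-- `Q(x, Y) ↦ c⁻² Q(c² x, c Y)`. -/
noncomputable def weightedRescale (c : K) (Q : K⟦X⟧[X]) : K⟦X⟧[X] :=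
  .C (C (c ^ 2)⁻¹) * (Q.map (rescale (c ^ 2))).comp (.C (C c) * .X)

theorem coeff_coeff_weightedRescale (c : K) (Q : K⟦X⟧[X]) (i j : ℕ) :
    coeff i ((weightedRescale c Q).coeff j) =
      (c ^ 2)⁻¹ * c ^ j * (c ^ 2) ^ i * coeff i (Q.coeff j) := by
  rw [weightedRescale, Polynomial.coeff_C_mul, comp_C_mul_X_coeff, Polynomial.coeff_map,
    ← map_pow, mul_comm (rescale _ _), ← mul_assoc, ← map_mul, coeff_C_mul, coeff_rescale]
  ring

theorem eval_weightedRescale {c : K} (hc : c ≠ 0) (Q : K⟦X⟧[X]) (z : K⟦X⟧) :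
    (weightedRescale c Q).eval (C c⁻¹ * rescale (c ^ 2) z) =
      C (c ^ 2)⁻¹ * rescale (c ^ 2) (Q.eval z) := by
  rw [weightedRescale, eval_mul, eval_C, eval_comp, eval_mul, eval_C, eval_X, ← mul_assoc,
    ← map_mul, mul_inv_cancel₀ hc, map_one, one_mul, eval_map, eval₂_at_apply]

theorem rescale_mem_withCoeffsIn_of_eval_eq_zero {R : Subring K} {Q : K⟦X⟧[X]}
    (hQ : ∀ j, Q.coeff j ∈ withCoeffsIn R) (hc : constantCoeff (Q.coeff 1) ≠ 0) {z : K⟦X⟧}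
    (hz0 : constantCoeff z = 0) (hz : Q.eval z = 0) :
    C (constantCoeff (Q.coeff 1))⁻¹ * rescale (constantCoeff (Q.coeff 1) ^ 2) z ∈
      withCoeffsIn R := by
  set c := constantCoeff (Q.coeff 1)
  have hcR : c ∈ R := by simpa using mem_withCoeffsIn.1 (hQ 1) 0
  have hc1 : coeff 0 (Q.coeff 1) = c := coeff_zero_eq_constantCoeff_apply _
  have hq00 : coeff 0 (Q.coeff 0) = 0 := by
    rw [coeff_zero_eq_constantCoeff_apply]
    exact constantCoeff_coeff_zero_eq_zero_of_eval_eq_zero hz0 hz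
  refine mem_withCoeffsIn_of_eval_eq_zero (Q := weightedRescale c Q) (fun j ↦ ?_) ?_ ?_ ?_
  · refine mem_withCoeffsIn.2 fun i ↦ ?_
    have hq : coeff i (Q.coeff j) ∈ R := mem_withCoeffsIn.1 (hQ j) i
    rw [coeff_coeff_weightedRescale]
    -- the weight `c^(2i + j - 2)` is a genuine power except at `(i, j) = (0, 0), (0, 1)`
    match i, j with
    | 0, 0 => simp [hq00]
    | 0, 1 =>
      rw [hc1, show (c ^ 2)⁻¹ * c ^ 1 * (c ^ 2) ^ 0 * c = 1 by field_simp]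
      exact R.one_mem
    | 0, j + 2 =>
      rw [show (c ^ 2)⁻¹ * c ^ (j + 2) * (c ^ 2) ^ 0 = c ^ j by field_simp; ring]
      exact mul_mem (pow_mem hcR j) hq
    | i + 1, j =>
      rw [show (c ^ 2)⁻¹ * c ^ j * (c ^ 2) ^ (i + 1) = c ^ j * (c ^ 2) ^ i by field_simp; ring]
      exact mul_mem (mul_mem (pow_mem hcR j) (pow_mem (pow_mem hcR 2) i)) hq
  · rw [← coeff_zero_eq_constantCoeff_apply, coeff_coeff_weightedRescale, hc1]
    field_simp
  · rw [← coeff_zero_eq_constantCoeff_apply, coeff_C_mul, coeff_rescale,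
      coeff_zero_eq_constantCoeff_apply, hz0, mul_zero, mul_zero]
  · rw [eval_weightedRescale hc, hz, map_zero, mul_zero]

end Field

theorem exists_isIntegral_inv_mul_pow_mul_coeff {K : Type*} [Field K] [NumberField K]
    {P : K[X][X]} {z : K⟦X⟧} (hz0 : constantCoeff z = 0)
    (hz : P.eval₂ coeToPowerSeries.ringHom z = 0) (hc : (P.coeff 1).coeff 0 ≠ 0) :
    ∃ γ : K, γ ≠ 0 ∧ ∀ n, IsIntegral ℤ (γ⁻¹ * (γ ^ 2) ^ n * coeff n z) := by
  obtain ⟨u, hu, hint⟩ := exists_int_smul_coeff_coeff_isIntegral P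
  set Q : K⟦X⟧[X] := u • P.map coeToPowerSeries.ringHom
  have hQcoeff : ∀ j i, coeff i (Q.coeff j) = u • (P.coeff j).coeff i := fun j i ↦ by
    rw [Polynomial.coeff_smul, map_zsmul, Polynomial.coeff_map, coeToPowerSeries.ringHom_apply,
      Polynomial.coeff_coe]
  have hQ : ∀ j, Q.coeff j ∈ withCoeffsIn (integralClosure ℤ K).toSubring := fun j ↦
    mem_withCoeffsIn.2 fun i ↦ by rw [hQcoeff]; exact hint j i
  have hγ : constantCoeff (Q.coeff 1) ≠ 0 := by
    rw [← coeff_zero_eq_constantCoeff_apply, hQcoeff, zsmul_eq_mul]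
    exact mul_ne_zero (Int.cast_ne_zero.2 hu) hc
  have hQz : Q.eval z = 0 := by
    rw [Polynomial.eval_smul, eval_map, hz, smul_zero]
  refine ⟨_, hγ, fun n ↦ ?_⟩
  have := mem_withCoeffsIn.1 (rescale_mem_withCoeffsIn_of_eval_eq_zero hQ hγ hz0 hQz) n
  rwa [coeff_C_mul, coeff_rescale, ← mul_assoc] at this

end PowerSeries

theorem eisenstein_integrality_general
    (K : Type*) [Field K] [NumberField K]
    (y : PowerSeries K) (P : Polynomial (Polynomial K))
    (halg : Polynomial.eval₂ (Polynomial.coeToPowerSeries.ringHom) y P = 0)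
    (hsimple : (Polynomial.eval (Polynomial.C ((PowerSeries.coeff 0) y))
        (Polynomial.derivative P)).eval 0 ≠ 0) :
    ∃ D : ℤ, D ≠ 0 ∧
      ∀ n : ℕ, IsIntegral ℤ ((D : K) ^ (n + 1) * (PowerSeries.coeff n) y) := by
  set a₀ := PowerSeries.coeff 0 y
  have hz0 : PowerSeries.constantCoeff (y - PowerSeries.C a₀) = 0 := by simp [a₀]
  have hz : (taylor (C a₀) P).eval₂ coeToPowerSeries.ringHom (y - PowerSeries.C a₀) = 0 := by
    rw [taylor_apply, eval₂_comp, eval₂_add, eval₂_X, eval₂_C, coeToPowerSeries.ringHom_apply,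
      coe_C, sub_add_cancel, halg]
  have hc : ((taylor (C a₀) P).coeff 1).coeff 0 ≠ 0 := by
    rwa [taylor_coeff_one, coeff_zero_eq_eval_zero]
  obtain ⟨γ, hγ, hint⟩ := PowerSeries.exists_isIntegral_inv_mul_pow_mul_coeff hz0 hz hc
  refine exists_int_pow_succ_mul_isIntegral hγ fun n hn ↦ ?_
  simpa [PowerSeries.coeff_C, hn] using hint n

/-- Eisenstein-type integrality: let `K` be a number field and `y = Σ a_n xⁿ ∈ K[[x]]`
a power series algebraic over `K(x)`, satisfying `P(x, y) = 0` for a nonzero polynomial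
`P ∈ K[x][Y]` with `∂P/∂Y(0, a_0) ≠ 0`.  Then there is a nonzero integer `D` such that
`D^{n+1} a_n` is integral (lies in `O_K`) for all `n`; in particular all but finitely
many primes of `O_K` are such that every `a_n` is integral at them. -/
theorem eisenstein_integrality
    (K : Type*) [Field K] [NumberField K]
    (y : PowerSeries K) (P : Polynomial (Polynomial K)) (hP : P ≠ 0)
    (halg : Polynomial.eval₂ (Polynomial.coeToPowerSeries.ringHom) y P = 0)
    (hsimple : (Polynomial.eval (Polynomial.C ((PowerSeries.coeff 0) y))
        (Polynomial.derivative P)).eval 0 ≠ 0) :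
    ∃ D : ℤ, D ≠ 0 ∧
      ∀ n : ℕ, IsIntegral ℤ ((D : K) ^ (n + 1) * (PowerSeries.coeff n) y) :=
  eisenstein_integrality_general K y P halg hsimple
end
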